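/- Let L have weights (2,2,p,q), and let ℓ = Σ ℓ_i x_i and z = Σ z_i x_i be elements of the interval [s, s+δ]. Then for indices 1 ≤ i,j ≤ 4, the inequality (2c − z + z_i x_i) − (2c − ℓ + ℓ_j x_j) ≥ 0 holds if and only if i = j and ℓ_t ≥ z_t for all t ≠ j. -/

import Mathlib

/-- The subgroup of relations `p i • x_i - c` in the free abelian group on `x_1,…,x_n,c`. -/
def Lrel (n : ℕ) (p : Fin n → ℤ) : AddSubgroup ((Fin n → ℤ) × ℤ) :=
  AddSubgroup.closure {v | ∃ i : Fin n, v = (Pi.single i (p i), -1)}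

/-- The Geigle-Lenzing group `L = ⟨x_1,…,x_n,c⟩ / ⟨p_i x_i - c⟩`. -/
abbrev Lgrp (n : ℕ) (p : Fin n → ℤ) : Type :=
  ((Fin n → ℤ) × ℤ) ⧸ Lrel n p

/-- The generator `x_i` of `L`. -/
def Lx (n : ℕ) (p : Fin n → ℤ) (i : Fin n) : Lgrp n p :=
  QuotientAddGroup.mk (Pi.single i 1, 0)

/-- The canonical element `c` of `L`. -/
def Lc (n : ℕ) (p : Fin n → ℤ) : Lgrp n p :=
  QuotientAddGroup.mk (0, 1)

/-- The positive cone `L_+`, the submonoid generated by `x_1,…,x_n,c`. -/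
def Lplus (n : ℕ) (p : Fin n → ℤ) : AddSubmonoid (Lgrp n p) :=
  AddSubmonoid.closure (Set.range (Lx n p) ∪ {Lc n p})

namespace GLpq

variable (p q : ℤ)

/-- The weight sequence `(2,2,p,q)`. -/
def w : Fin 4 → ℤ := ![2, 2, p, q]

/-- The generator `x_i`. -/
def X (i : Fin 4) : Lgrp 4 (w p q) := Lx 4 (w p q) i

/-- The canonical element `c`. -/
def C : Lgrp 4 (w p q) := Lc 4 (w p q)

/-- The positive cone `L_+`. -/
def pos : AddSubmonoid (Lgrp 4 (w p q)) := Lplus 4 (w p q)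

/-- The element `Σ l_i x_i`. -/
def elt (l : Fin 4 → ℤ) : Lgrp 4 (w p q) := ∑ t, l t • X p q t

/-- `s = x_1 + x_2 + x_3 + x_4`. -/
def s : Lgrp 4 (w p q) := ∑ t, X p q t

/-- The dualizing element `ω = c − s`. -/
def om : Lgrp 4 (w p q) := C p q - s p q

/-- The partial order: `a ≤ b` iff `b − a ∈ L_+`. -/
def le (a b : Lgrp 4 (w p q)) : Prop := b - a ∈ pos p q

/-- The condition for `Σ l_i x_i` to lie in `[s, s+δ]`:
`l_1 = l_2 = 1`, `1 ≤ l_3 ≤ p−1`, `1 ≤ l_4 ≤ q−1`. -/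
def inInterval (l : Fin 4 → ℤ) : Prop :=
  l 0 = 1 ∧ l 1 = 1 ∧ 1 ≤ l 2 ∧ l 2 ≤ p - 1 ∧ 1 ≤ l 3 ∧ l 3 ≤ q - 1

end GLpq

namespace GLpqAux

open GLpq

theorem mem_Lrel_iff {n : ℕ} (p : Fin n → ℤ) (x : (Fin n → ℤ) × ℤ) :
    x ∈ Lrel n p ↔ ∃ d : Fin n → ℤ, x.1 = (fun t => d t * p t) ∧ x.2 = -∑ t, d t := by
  constructor
  · intro hx
    induction hx using AddSubgroup.closure_induction with
    | mem v hv =>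
      obtain ⟨i, rfl⟩ := hv
      refine ⟨Pi.single i 1, ?_, ?_⟩
      · funext t
        by_cases h : t = i <;> simp [Pi.single_apply, h]
      · simp [Finset.sum_pi_single']
    | zero => exact ⟨0, by funext t; simp, by simp⟩
    | add a b _ _ ha hb =>
      obtain ⟨d, hd1, hd2⟩ := ha
      obtain ⟨e, he1, he2⟩ := hb
      refine ⟨d + e, ?_, ?_⟩
      · funext t; simp [Prod.fst_add, hd1, he1]; ring
      · simp [Prod.snd_add, hd2, he2, Finset.sum_add_distrib]; ring
    | neg a _ ha =>
      obtain ⟨d, hd1, hd2⟩ := ha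
      refine ⟨-d, ?_, ?_⟩
      · funext t; simp [hd1]
      · simp [hd2]
  · rintro ⟨d, h1, h2⟩
    have hx : x = ∑ i, d i • (Pi.single i (p i), (-1 : ℤ)) := by
      have key : (∑ i, d i • (Pi.single i (p i), (-1 : ℤ)))
          = ((fun t => d t * p t : Fin n → ℤ), -∑ i, d i) := by
        rw [Prod.ext_iff]
        constructor
        · simp only [Prod.fst_sum, Prod.smul_fst]
          funext t
          rw [Finset.sum_apply]
          simp [Pi.single_apply, mul_comm]
        · simp [Prod.snd_sum]
      rw [key, Prod.ext_iff]
      exact ⟨h1, h2⟩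
    rw [hx]
    refine AddSubgroup.sum_mem _ (fun i _ => AddSubgroup.zsmul_mem _ ?_ _)
    exact AddSubgroup.subset_closure (show _ ∈ {v | ∃ i : Fin n, v = (Pi.single i (p i), -1)} from ⟨i, rfl⟩)


variable (p q : ℤ)

/-- The normal-form "c-coefficient" function. -/
def mtil (x : (Fin 4 → ℤ) × ℤ) : ℤ := x.2 + ∑ t, (x.1 t) / (w p q t)

theorem w_ge_two (hp : 2 ≤ p) (hq : 2 ≤ q) (t : Fin 4) : 2 ≤ w p q t := by
  fin_cases t <;> simp [w] <;> omega

theorem w_pos (hp : 2 ≤ p) (hq : 2 ≤ q) (t : Fin 4) : 0 < w p q t := by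
  have := w_ge_two p q hp hq t; omega

theorem mtil_invariant (hp : 2 ≤ p) (hq : 2 ≤ q) (x r : (Fin 4 → ℤ) × ℤ)
    (hr : r ∈ Lrel 4 (w p q)) : mtil p q (x + r) = mtil p q x := by
  obtain ⟨d, h1, h2⟩ := (mem_Lrel_iff (w p q) r).1 hr
  simp only [mtil, Prod.fst_add, Prod.snd_add, Pi.add_apply, h1, h2]
  have : ∀ t : Fin 4, (x.1 t + d t * w p q t) / w p q t = x.1 t / w p q t + d t :=
    fun t => Int.add_mul_ediv_right _ _ (by have := w_pos p q hp hq t; omega)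
  simp only [this, Finset.sum_add_distrib]
  ring

theorem mtil_superadd (hp : 2 ≤ p) (hq : 2 ≤ q) (x y : (Fin 4 → ℤ) × ℤ) :
    mtil p q x + mtil p q y ≤ mtil p q (x + y) := by
  simp only [mtil, Prod.fst_add, Prod.snd_add, Pi.add_apply]
  have : ∀ t : Fin 4, x.1 t / w p q t + y.1 t / w p q t ≤ (x.1 t + y.1 t) / w p q t := by
    intro t
    have hc := w_pos p q hp hq t
    rw [Int.le_ediv_iff_mul_le hc, add_mul]
    have h1 := Int.ediv_mul_le (x.1 t) (by omega : w p q t ≠ 0)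
    have h2 := Int.ediv_mul_le (y.1 t) (by omega : w p q t ≠ 0)
    omega
  calc x.2 + (∑ t, x.1 t / w p q t) + (y.2 + ∑ t, y.1 t / w p q t)
      = x.2 + y.2 + ((∑ t, x.1 t / w p q t) + ∑ t, y.1 t / w p q t) := by ring
    _ ≤ x.2 + y.2 + ∑ t, (x.1 t + y.1 t) / w p q t := by
        rw [← Finset.sum_add_distrib]
        exact add_le_add le_rfl (Finset.sum_le_sum fun t _ => this t)

theorem mtil_nonneg_of_pos (hp : 2 ≤ p) (hq : 2 ≤ q) (e : Lgrp 4 (w p q))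
    (he : e ∈ pos p q) : ∀ x, QuotientAddGroup.mk x = e → 0 ≤ mtil p q x := by
  induction he using AddSubmonoid.closure_induction with
  | mem g hg =>
    intro x hx
    rcases hg with ⟨t, rfl⟩ | rfl
    · -- g = X t
      have : -(Pi.single t 1, (0:ℤ)) + x ∈ Lrel 4 (w p q) := by
        rw [← QuotientAddGroup.eq]
        exact hx.symm
      have hxeq : x = (Pi.single t 1, (0:ℤ)) + (-(Pi.single t 1, (0:ℤ)) + x) := by abel
      rw [hxeq, mtil_invariant p q hp hq _ _ this]
      have : mtil p q (Pi.single t 1, (0:ℤ)) = ∑ u, ((Pi.single t 1 : Fin 4 → ℤ) u) / w p q u := by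
        simp [mtil]
      rw [this]
      have hz : ∀ u : Fin 4, ((Pi.single t 1 : Fin 4 → ℤ) u) / w p q u = 0 := by
        intro u
        have hcu := w_pos p q hp hq u
        have : (Pi.single t 1 : Fin 4 → ℤ) u = if u = t then 1 else 0 := Pi.single_apply t 1 u
        rw [this]
        split_ifs with h
        · exact Int.ediv_eq_zero_of_lt (by omega) (by have := w_ge_two p q hp hq u; omega)
        · simp
      simp [hz]
    · -- g = C
      have : -((0 : Fin 4 → ℤ), (1:ℤ)) + x ∈ Lrel 4 (w p q) := by
        rw [← QuotientAddGroup.eq]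
        exact hx.symm
      have hxeq : x = ((0 : Fin 4 → ℤ), (1:ℤ)) + (-((0 : Fin 4 → ℤ), (1:ℤ)) + x) := by abel
      rw [hxeq, mtil_invariant p q hp hq _ _ this]
      simp [mtil]
  | zero =>
    intro x hx
    have : -((0 : Fin 4 → ℤ), (0:ℤ)) + x ∈ Lrel 4 (w p q) := by
      rw [← QuotientAddGroup.eq]
      rw [hx]; rfl
    have hxeq : x = ((0 : Fin 4 → ℤ), (0:ℤ)) + (-((0 : Fin 4 → ℤ), (0:ℤ)) + x) := by abel
    rw [hxeq, mtil_invariant p q hp hq _ _ this]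
    simp [mtil]
  | add a b ha hb iha ihb =>
    intro x hx
    obtain ⟨ya, hya⟩ := QuotientAddGroup.mk_surjective a
    obtain ⟨yb, hyb⟩ := QuotientAddGroup.mk_surjective b
    have hsum : QuotientAddGroup.mk (ya + yb) = a + b := by
      rw [← hya, ← hyb]; rfl
    have : -(ya + yb) + x ∈ Lrel 4 (w p q) := by
      rw [← QuotientAddGroup.eq]
      rw [hsum]; exact hx.symm
    have hxeq : x = (ya + yb) + (-(ya + yb) + x) := by abel
    rw [hxeq, mtil_invariant p q hp hq _ _ this]
    have h1 := iha ya hya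
    have h2 := ihb yb hyb
    have h3 := mtil_superadd p q hp hq ya yb
    omega


theorem smul_X (c : ℤ) (i : Fin 4) :
    c • X p q i = QuotientAddGroup.mk (Pi.single i c, (0:ℤ)) := by
  have : c • X p q i = QuotientAddGroup.mk (c • (Pi.single i 1, (0:ℤ))) := by
    rw [show X p q i = QuotientAddGroup.mk' (Lrel 4 (w p q)) (Pi.single i 1, (0:ℤ)) from rfl,
      ← map_zsmul]
    rfl
  rw [this]
  congr 1
  ext u
  · simp [Pi.single_apply, mul_ite]
  · simp

theorem elt_eq_mk (a : Fin 4 → ℤ) :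
    elt p q a = QuotientAddGroup.mk (a, (0:ℤ)) := by
  unfold elt
  have : ∀ t : Fin 4, a t • X p q t = QuotientAddGroup.mk (Pi.single t (a t), (0:ℤ)) :=
    fun t => smul_X p q (a t) t
  simp only [this]
  have hms : (∑ x : Fin 4, (QuotientAddGroup.mk (Pi.single x (a x), (0:ℤ)) : Lgrp 4 (w p q)))
      = QuotientAddGroup.mk (∑ x : Fin 4, ((Pi.single x (a x) : Fin 4 → ℤ), (0:ℤ))) :=
    (map_sum (QuotientAddGroup.mk' (Lrel 4 (w p q)))
      (fun x => ((Pi.single x (a x) : Fin 4 → ℤ), (0:ℤ))) Finset.univ).symm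
  rw [hms]
  congr 1
  ext u
  · rw [Prod.fst_sum, Finset.sum_apply]
    simp [Pi.single_apply]
  · simp [Prod.snd_sum]

theorem mk_mem_pos_iff (hp : 2 ≤ p) (hq : 2 ≤ q) (a : Fin 4 → ℤ)
    (hb : ∀ t, 1 - w p q t ≤ a t ∧ a t ≤ w p q t - 1) :
    (QuotientAddGroup.mk (a, (0:ℤ)) : Lgrp 4 (w p q)) ∈ pos p q ↔ ∀ t, 0 ≤ a t := by
  constructor
  · intro h
    have h0 := mtil_nonneg_of_pos p q hp hq _ h (a, 0) rfl
    have hsum : mtil p q (a, 0) = ∑ t, a t / w p q t := by simp [mtil]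
    rw [hsum, Fin.sum_univ_four] at h0
    have key : ∀ u : Fin 4, a u / w p q u ≤ 0 ∧ (0 ≤ a u / w p q u ↔ 0 ≤ a u) := by
      intro u
      have hc := w_pos p q hp hq u
      have hbu := hb u
      have hiff : 0 ≤ a u / w p q u ↔ 0 * w p q u ≤ a u := Int.le_ediv_iff_mul_le hc
      rw [zero_mul] at hiff
      refine ⟨?_, hiff⟩
      by_contra h'
      have h1 : 1 ≤ a u / w p q u := by omega
      rw [Int.le_ediv_iff_mul_le hc] at h1
      omega
    have k0 := key 0
    have k1 := key 1
    have k2 := key 2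
    have k3 := key 3
    intro t
    fin_cases t
    · show (0:ℤ) ≤ a 0; omega
    · show (0:ℤ) ≤ a 1; omega
    · show (0:ℤ) ≤ a 2; omega
    · show (0:ℤ) ≤ a 3; omega
  · intro h
    rw [← elt_eq_mk]
    unfold elt
    refine AddSubmonoid.sum_mem _ (fun t _ => ?_)
    have hX : X p q t ∈ pos p q :=
      AddSubmonoid.subset_closure (Or.inl ⟨t, rfl⟩)
    rw [show a t = ((a t).toNat : ℤ) from (Int.toNat_of_nonneg (h t)).symm, natCast_zsmul]
    exact AddSubmonoid.nsmul_mem _ hX _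

theorem ineq_iff' (hp : 2 ≤ p) (hq : 2 ≤ q) (l z : Fin 4 → ℤ)
    (hl : GLpq.inInterval p q l) (hz : GLpq.inInterval p q z) (i j : Fin 4) :
    GLpq.le p q ((2 : ℤ) • GLpq.C p q - GLpq.elt p q l + l j • GLpq.X p q j)
      ((2 : ℤ) • GLpq.C p q - GLpq.elt p q z + z i • GLpq.X p q i) ↔
    (i = j ∧ ∀ t, t ≠ j → z t ≤ l t) := by
  obtain ⟨hl0, hl1, hl2, hl2', hl3, hl3'⟩ := hl
  obtain ⟨hz0, hz1, hz2, hz2', hz3, hz3'⟩ := hz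
  have hlt : ∀ t : Fin 4, 1 ≤ l t ∧ l t ≤ w p q t - 1 := by
    intro t
    fin_cases t <;> simp [w] <;> omega
  have hzt : ∀ t : Fin 4, 1 ≤ z t ∧ z t ≤ w p q t - 1 := by
    intro t
    fin_cases t <;> simp [w] <;> omega
  set A : Fin 4 → ℤ :=
    fun t => l t - z t + (if t = i then z i else 0) - (if t = j then l j else 0) with hA
  have hC2 : (2 : ℤ) • C p q = QuotientAddGroup.mk ((0 : Fin 4 → ℤ), (2:ℤ)) := by
    rw [show C p q = QuotientAddGroup.mk' (Lrel 4 (w p q)) ((0 : Fin 4 → ℤ), (1:ℤ)) from rfl,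
      ← map_zsmul]
    rfl
  have hrep : (A, (0:ℤ)) = ((((0:Fin 4 → ℤ), (2:ℤ)) - (z, (0:ℤ)) + (Pi.single i (z i), (0:ℤ)))
      - (((0:Fin 4 → ℤ), (2:ℤ)) - (l, (0:ℤ)) + (Pi.single j (l j), (0:ℤ)))) := by
    ext u
    · simp only [hA, Prod.fst_sub, Prod.fst_add, Pi.sub_apply, Pi.add_apply,
        Prod.fst_zero, Pi.zero_apply]
      have h1 : (Pi.single i (z i) : Fin 4 → ℤ) u = if u = i then z i else 0 :=
        Pi.single_apply i (z i) u
      have h2 : (Pi.single j (l j) : Fin 4 → ℤ) u = if u = j then l j else 0 :=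
        Pi.single_apply j (l j) u
      simp only [h1, h2]
      ring
    · simp
  have hE : ((2 : ℤ) • C p q - elt p q z + z i • X p q i)
      - ((2 : ℤ) • C p q - elt p q l + l j • X p q j)
      = QuotientAddGroup.mk (A, (0:ℤ)) := by
    rw [hC2, elt_eq_mk, elt_eq_mk, smul_X, smul_X, hrep]
    simp only [QuotientAddGroup.mk_sub, QuotientAddGroup.mk_add]
  have hbounds : ∀ t, 1 - w p q t ≤ A t ∧ A t ≤ w p q t - 1 := by
    intro t
    have hwt := w_ge_two p q hp hq t
    have h1 := hlt t
    have h2 := hzt t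
    by_cases hti : t = i <;> by_cases htj : t = j <;>
      simp only [hA, hti, htj, if_pos, if_neg, ite_true, ite_false] <;>
      first
        | (subst hti; subst htj; simp; omega)
        | (subst hti; simp [htj]; omega)
        | (subst htj; simp [hti]; omega)
        | (simp [hti, htj]; omega)
  unfold GLpq.le
  rw [hE, mk_mem_pos_iff p q hp hq A hbounds]
  by_cases hij : i = j
  · subst hij
    constructor
    · intro h
      refine ⟨rfl, fun t ht => ?_⟩
      have := h t
      simp only [hA, if_neg ht] at this
      omega
    · rintro ⟨-, h⟩ t
      by_cases ht : t = i
      · subst ht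
        simp [hA]
      · have := h t ht
        simp only [hA, if_neg ht]
        omega
  · constructor
    · intro h
      exfalso
      have hAj : (0:ℤ) ≤ (l j - z j + (if j = i then z i else 0)) - (if j = j then l j else 0) :=
        h j
      have hzj := (hzt j).1
      rw [if_pos rfl, if_neg (fun hh : j = i => hij hh.symm)] at hAj
      omega
    · rintro ⟨rfl, -⟩
      exact absurd rfl hij

end GLpqAux

open GLpq in
/-- For `ℓ, z ∈ [s, s+δ]`, the inequality
`(2c − z + z_i x_i) − (2c − ℓ + ℓ_j x_j) ≥ 0` holds iff `i = j` and
`ℓ_t ≥ z_t` for all `t ≠ j`. -/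
theorem ineq_iff (p q : ℤ) (hp : 2 ≤ p) (hq : 2 ≤ q) (l z : Fin 4 → ℤ)
    (hl : inInterval p q l) (hz : inInterval p q z) (i j : Fin 4) :
    le p q ((2 : ℤ) • C p q - elt p q l + l j • X p q j)
      ((2 : ℤ) • C p q - elt p q z + z i • X p q i) ↔
    (i = j ∧ ∀ t, t ≠ j → z t ≤ l t) := by
  exact GLpqAux.ineq_iff' p q hp hq l z hl hz i j
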